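/- arXiv:1603.04194 — 9 statements merged into one kernel-verified Lean document; each statement's English description precedes it below -/
import Mathlib

section
/- If the law of X has no atoms in [-∞,∞], then P(X = Q(F(X))) = 1, where F is the distribution function of X and Q its right-continuous quantile function. -/
open MeasureTheory Set

/-- Lemma A.1(v): if the law of `X` has no atoms in `[-∞,∞]`, then `X = Q(F(X))` almost
surely, where `F` is the distribution function of `X` and `Q` its right-continuous
quantile function. -/
theorem stmt_4 {Ω : Type*} [MeasurableSpace Ω] (μ : Measure Ω) [IsProbabilityMeasure μ]
    (X : Ω → EReal) (hX : Measurable X)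
    (F : EReal → ℝ) (hF : ∀ x : EReal, F x = (μ {ω | X ω ≤ x}).toReal)
    (Q : ℝ → EReal)
    (hQ : ∀ p : ℝ, Q p = sSup ((fun x : ℝ => (x : EReal)) '' {x : ℝ | F (x : EReal) ≤ p}))
    (hatomless : ∀ c : EReal, μ {ω | X ω = c} = 0) :
    μ {ω | X ω = Q (F (X ω))} = 1 := by
  -- measurability of sublevel sets
  have hIic : ∀ c : EReal, MeasurableSet {ω | X ω ≤ c} := fun c => hX measurableSet_Iic
  have hfin : ∀ s : Set Ω, μ s ≠ ⊤ := fun s => measure_ne_top μ s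
  -- monotonicity of F
  have hmono : ∀ x y : EReal, x ≤ y → F x ≤ F y := by
    intro x y hxy
    rw [hF, hF]
    exact ENNReal.toReal_mono (hfin _) (measure_mono (fun ω h => le_trans h hxy))
  -- equal F values give equal measures
  have hFeq : ∀ x y : EReal, F x = F y → μ {ω | X ω ≤ x} = μ {ω | X ω ≤ y} := by
    intro x y h
    rw [hF, hF] at h
    exact (ENNReal.toReal_eq_toReal_iff' (hfin _) (hfin _)).mp h
  -- the "flat interval" null sets indexed by rationals
  set C : ℚ → ℚ → Set Ω :=
    fun q m => {ω | ((m : ℝ) : EReal) < X ω ∧ X ω ≤ ((q : ℝ) : EReal) ∧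
      F ((m : ℝ) : EReal) = F ((q : ℝ) : EReal)}
    with hC
  have hCnull : ∀ q m : ℚ, μ (C q m) = 0 := by
    intro q m
    by_cases hfm : F ((m : ℝ) : EReal) = F ((q : ℝ) : EReal)
    · by_cases hmq : ((m : ℝ) : EReal) ≤ ((q : ℝ) : EReal)
      · have hset : C q m = {ω | X ω ≤ ((q : ℝ) : EReal)} \ {ω | X ω ≤ ((m : ℝ) : EReal)} := by
          ext ω
          simp only [hC, mem_setOf_eq, mem_diff, not_le]
          constructor
          · rintro ⟨h1, h2, _⟩; exact ⟨h2, h1⟩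
          · rintro ⟨h2, h1⟩; exact ⟨h1, h2, hfm⟩
        have hsub : {ω | X ω ≤ ((m : ℝ) : EReal)} ⊆ {ω | X ω ≤ ((q : ℝ) : EReal)} :=
          fun ω h => le_trans h hmq
        rw [hset, measure_diff hsub (hIic _).nullMeasurableSet (hfin _),
          hFeq _ _ hfm, tsub_self]
      · have hset : C q m = ∅ := by
          ext ω
          simp only [hC, mem_setOf_eq, mem_empty_iff_false, iff_false, not_and]
          intro h1 h2
          exact absurd ((h2.trans_lt (not_le.mp hmq)).trans h1) (lt_irrefl _)
        rw [hset, measure_empty]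
    · have hset : C q m = ∅ := by
        ext ω
        constructor
        · rintro ⟨_, _, h⟩; exact absurd h hfm
        · exact fun h => absurd h (notMem_empty ω)
      rw [hset, measure_empty]
  -- the left-endpoint of the flat interval below q
  set t : ℚ → EReal :=
    fun q => sInf ((fun x : ℝ => (x : EReal)) ''
      {x : ℝ | x ≤ (q : ℝ) ∧ F (x : EReal) = F ((q : ℝ) : EReal)}) with ht
  -- the global null set
  set N : Set Ω := {ω | X ω = (⊥ : EReal)} ∪ {ω | X ω = (⊤ : EReal)} ∪
      ⋃ q : ℚ, ({ω | X ω = t q} ∪ ⋃ m : ℚ, C q m) with hN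
  have hNnull : μ N = 0 := by
    rw [hN]
    refine measure_union_null (measure_union_null (hatomless ⊥) (hatomless ⊤)) ?_
    refine measure_iUnion_null fun q => measure_union_null (hatomless (t q)) ?_
    exact measure_iUnion_null fun m => hCnull q m
  -- the complement of the good set is included in N
  have hsubN : {ω | X ω = Q (F (X ω))}ᶜ ⊆ N := by
    intro ω hω
    simp only [mem_compl_iff, mem_setOf_eq] at hω
    by_cases hb : X ω = ⊥
    · exact Or.inl (Or.inl hb)
    by_cases htop : X ω = ⊤
    · exact Or.inl (Or.inr htop)
    -- X ω is a real number r
    obtain ⟨r, hr⟩ : ∃ r : ℝ, X ω = (r : EReal) := ⟨(X ω).toReal, (EReal.coe_toReal htop hb).symm⟩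
    set p : ℝ := F (X ω) with hp
    -- r is in the set whose sSup is Q p
    have hrmem : (r : EReal) ∈ (fun x : ℝ => (x : EReal)) '' {x : ℝ | F (x : EReal) ≤ p} :=
      ⟨r, by simp only [mem_setOf_eq, hp, hr]; exact le_refl _, rfl⟩
    have hle : (r : EReal) ≤ Q p := by rw [hQ]; exact le_sSup hrmem
    have hlt : (r : EReal) < Q p := lt_of_le_of_ne hle (by rw [← hr]; exact hω)
    rw [hQ] at hlt
    obtain ⟨y, ⟨x, hxmem, rfl⟩, hry⟩ := lt_sSup_iff.mp hlt
    have hrx : r < x := EReal.coe_lt_coe_iff.mp hry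
    have hFx : F ((x : ℝ) : EReal) = F ((r : ℝ) : EReal) := by
      refine le_antisymm ?_ (hmono _ _ (EReal.coe_le_coe_iff.mpr hrx.le))
      calc F ((x : ℝ) : EReal) ≤ p := hxmem
        _ = F ((r : ℝ) : EReal) := by rw [hp, hr]
    -- pick a rational q between r and x
    obtain ⟨q, hrq, hqx⟩ := exists_rat_btwn hrx
    have hFq : F (((q : ℝ) : ℝ) : EReal) = F ((r : ℝ) : EReal) := by
      refine le_antisymm ?_ (hmono _ _ (EReal.coe_le_coe_iff.mpr hrq.le))
      calc F (((q : ℝ)) : EReal) ≤ F ((x : ℝ) : EReal) :=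
            hmono _ _ (EReal.coe_le_coe_iff.mpr hqx.le)
        _ = F ((r : ℝ) : EReal) := hFx
    -- r belongs to S q, hence t q ≤ r
    have hrS : (r : EReal) ∈ (fun x : ℝ => (x : EReal)) ''
        {x : ℝ | x ≤ (q : ℝ) ∧ F (x : EReal) = F ((q : ℝ) : EReal)} :=
      ⟨r, ⟨hrq.le, hFq.symm⟩, rfl⟩
    have htle : t q ≤ (r : EReal) := sInf_le hrS
    refine Or.inr (mem_iUnion.mpr ⟨q, ?_⟩)
    rcases eq_or_lt_of_le htle with heq | hlt'
    · exact Or.inl (by simp only [mem_setOf_eq, hr, heq.symm])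
    · -- t q < r : find an element x' of S q below r, then a rational m between
      rw [ht] at hlt'
      obtain ⟨y', ⟨x', ⟨hx'q, hFx'⟩, rfl⟩, hx'r⟩ := sInf_lt_iff.mp hlt'
      have hx'r' : x' < r := EReal.coe_lt_coe_iff.mp hx'r
      obtain ⟨m, hx'm, hmr⟩ := exists_rat_btwn hx'r'
      have hFm : F (((m : ℝ)) : EReal) = F ((q : ℝ) : EReal) := by
        refine le_antisymm ?_ ?_
        · calc F (((m : ℝ)) : EReal) ≤ F ((r : ℝ) : EReal) :=
              hmono _ _ (EReal.coe_le_coe_iff.mpr hmr.le)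
            _ = F ((q : ℝ) : EReal) := hFq.symm
        · calc F ((q : ℝ) : EReal) = F ((x' : ℝ) : EReal) := hFx'.symm
            _ ≤ F (((m : ℝ)) : EReal) := hmono _ _ (EReal.coe_le_coe_iff.mpr hx'm.le)
      refine Or.inr (mem_iUnion.mpr ⟨m, ?_⟩)
      refine ⟨?_, ?_, hFm⟩
      · rw [hr]; exact EReal.coe_lt_coe_iff.mpr hmr
      · rw [hr]; exact EReal.coe_le_coe_iff.mpr hrq.le
  -- conclude
  have hGc : μ {ω | X ω = Q (F (X ω))}ᶜ = 0 :=
    measure_mono_null hsubN hNnull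
  have h1 : (1 : ENNReal) ≤ μ {ω | X ω = Q (F (X ω))} := by
    have := measure_union_le (μ := μ) {ω | X ω = Q (F (X ω))} {ω | X ω = Q (F (X ω))}ᶜ
    rw [union_compl_self, measure_univ, hGc, add_zero] at this
    exact this
  exact le_antisymm prob_le_one h1
end

section
/- Let (X_n) be a sequence of random variables on a common probability space with values in [-∞,∞], with right-continuous quantile functions Q_n, and let Q be the right-continuous quantile function of limsup_n X_n. Then Q(p) ≥ limsup_n Q_n(p) for all p ∈ [0,1]. -/
open MeasureTheory Set Filter

/-- Lemma A.2: if `Q_n` are the right-continuous quantile functions of `X_n` and `Q` that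
of `limsup_n X_n`, then `Q(p) ≥ limsup_n Q_n(p)` for all `p ∈ [0,1]`. -/
theorem stmt_5 {Ω : Type*} [MeasurableSpace Ω] (μ : Measure Ω) [IsProbabilityMeasure μ]
    (X : ℕ → Ω → EReal) (hX : ∀ n, Measurable (X n))
    (Qn : ℕ → ℝ → EReal)
    (hQn : ∀ n (p : ℝ), Qn n p = sSup ((fun x : ℝ => (x : EReal)) ''
      {x : ℝ | (μ {ω | X n ω ≤ (x : EReal)}).toReal ≤ p}))
    (Q : ℝ → EReal)
    (hQ : ∀ p : ℝ, Q p = sSup ((fun x : ℝ => (x : EReal)) ''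
      {x : ℝ | (μ {ω | limsup (fun n => X n ω) atTop ≤ (x : EReal)}).toReal ≤ p}))
    (p : ℝ) (hp : p ∈ Icc (0 : ℝ) 1) :
    limsup (fun n => Qn n p) atTop ≤ Q p := by
  rw [hQ, ← EReal.ge_of_forall_gt_iff_ge]
  intro z hz
  obtain ⟨y, hzy, hyL⟩ := EReal.exists_between_coe_real hz
  have hfreq : ∃ᶠ n in atTop, (y : EReal) < Qn n p :=
    Filter.frequently_lt_of_lt_limsup (by isBoundedDefault) hyL
  -- frequently the distribution function of `X n` at `y` is at most `p`
  have hfm : ∃ᶠ n in atTop, μ {ω | X n ω ≤ (y : EReal)} ≤ ENNReal.ofReal p := by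
    refine hfreq.mono fun n hn => ?_
    rw [hQn] at hn
    obtain ⟨e, he, hye⟩ := lt_sSup_iff.mp hn
    obtain ⟨x, hx, rfl⟩ := he
    have hyx : (y : EReal) ≤ (x : EReal) := hye.le
    have hmono : μ {ω | X n ω ≤ (y : EReal)} ≤ μ {ω | X n ω ≤ (x : EReal)} :=
      measure_mono fun ω hω => le_trans hω hyx
    refine hmono.trans ?_
    rw [← ENNReal.ofReal_toReal (measure_ne_top μ _)]
    exact ENNReal.ofReal_le_ofReal hx
  -- the set for limsup X is contained in the union of tails
  set B : ℕ → Set Ω := fun N => ⋂ k, ⋂ (_ : N ≤ k), {ω | X k ω ≤ (y : EReal)} with hB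
  have hBmono : Monotone B := by
    intro M N hMN
    refine fun ω hω => mem_iInter₂.mpr fun k hk => mem_iInter₂.mp hω k (hMN.trans hk)
  have hsub : {ω | limsup (fun n => X n ω) atTop ≤ (z : EReal)} ⊆ ⋃ N, B N := by
    intro ω hω
    have hlt : limsup (fun n => X n ω) atTop < (y : EReal) := lt_of_le_of_lt hω hzy
    have hev : ∀ᶠ k in atTop, X k ω < (y : EReal) :=
      Filter.eventually_lt_of_limsup_lt hlt
    obtain ⟨N, hN⟩ := hev.exists_forall_of_atTop
    exact mem_iUnion.mpr ⟨N, mem_iInter₂.mpr fun k hk => (hN k hk).le⟩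
  -- each tail has small measure
  have hBsmall : ∀ N, μ (B N) ≤ ENNReal.ofReal p := by
    intro N
    obtain ⟨m, hm, hmp⟩ := (hfm.and_eventually (eventually_ge_atTop N)).exists
    refine le_trans (measure_mono fun ω hω => mem_iInter₂.mp hω m hmp) hm
  have hkey : μ {ω | limsup (fun n => X n ω) atTop ≤ (z : EReal)} ≤ ENNReal.ofReal p := by
    refine le_trans (measure_mono hsub) ?_
    rw [(directed_of_isDirected_le hBmono).measure_iUnion]
    exact iSup_le hBsmall
  refine le_sSup ⟨z, ?_, rfl⟩
  exact ENNReal.toReal_le_of_le_ofReal hp.1 hkey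
end

section
/- Let U : D × [-∞,∞] → [-∞,∞] be such that for each s, x ↦ U(s,x) is non-decreasing and right-continuous, and for each x ∈ ℝ ∪ {∞}, s ↦ U(s,x) is upper semicontinuous. If z_n hypo-converges to z in USC(D) and s_n → s in D, then limsup_{n→∞} U(s_n, z_n(s_n)) ≤ U(s, z(s)). -/
/-!
Fix `b > U(s, z(s))`. If `z(s) < ⊤`, right-continuity of `U(s, ·)` gives `y > z(s)` with
`U(s, y) < b`. The first half of hypo-convergence makes `zₙ(sₙ) < y` eventually, and upper
semicontinuity of `U(·, y)` makes `U(sₙ, y) < b` eventually, so by monotonicity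
`U(sₙ, zₙ(sₙ)) < b` eventually. If `z(s) = ⊤` there is no room to the right, but then
`U(sₙ, zₙ(sₙ)) ≤ U(sₙ, ⊤)` and upper semicontinuity of `U(·, ⊤)` suffices.
-/

open Set Filter Topology

variable {α ι β γ : Type*} [TopologicalSpace α] {l : Filter ι}

lemma UpperSemicontinuousAt.limsup_comp_le [CompleteLinearOrder β] {f : α → β} {s : α}
    (hf : UpperSemicontinuousAt f s) {sn : ι → α} (hsn : Tendsto sn l (𝓝 s)) :
    limsup (f ∘ sn) l ≤ f s :=
  (limsup_comp f sn l).trans_le <|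
    (limsup_le_limsup_of_le hsn).trans (upperSemicontinuousAt_iff_limsup_le.1 hf)

lemma ContinuousWithinAt.exists_gt_lt_of_Ici [LinearOrder β] [TopologicalSpace β]
    [OrderTopology β] [LinearOrder γ] [TopologicalSpace γ] [OrderTopology γ]
    [DenselyOrdered γ] {f : γ → β} {x : γ} (hf : ContinuousWithinAt f (Ici x) x)
    (hx : ∃ y, x < y) {b : β} (hb : f x < b) : ∃ y, x < y ∧ f y < b := by
  have : NeBot (𝓝[>] x) := nhdsGT_neBot_of_exists_gt hx
  have hlt : ∀ᶠ y in 𝓝[Ici x] x, f y < b := hf (Iio_mem_nhds hb)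
  have hgt : ∀ᶠ y in 𝓝[>] x, x < y := self_mem_nhdsWithin
  exact (hgt.and (hlt.filter_mono (nhdsWithin_mono _ Ioi_subset_Ici_self))).exists

lemma limsup_apply_le_of_monotone_of_continuousWithinAt_Ici [CompleteLinearOrder β]
    [DenselyOrdered β] [TopologicalSpace β] [OrderTopology β] [CompleteLinearOrder γ]
    [Nontrivial γ] [DenselyOrdered γ] [TopologicalSpace γ] [OrderTopology γ] (U : α → γ → β)
    (hU_mono : ∀ s, Monotone (U s)) {s : α} {x : γ}
    (hU_right : ContinuousWithinAt (U s) (Ici x) x)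
    (hU_usc : ∀ y, y ≠ ⊥ → UpperSemicontinuousAt (fun s => U s y) s)
    {sn : ι → α} (hsn : Tendsto sn l (𝓝 s)) {xn : ι → γ} (hxn : limsup xn l ≤ x) :
    limsup (fun n => U (sn n) (xn n)) l ≤ U s x := by
  rcases eq_or_ne x ⊤ with rfl | hx
  · calc limsup (fun n => U (sn n) (xn n)) l
        ≤ limsup (fun n => U (sn n) ⊤) l :=
          limsup_le_limsup (Eventually.of_forall fun n => hU_mono _ le_top)
      _ ≤ U s ⊤ := (hU_usc ⊤ top_ne_bot).limsup_comp_le hsn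
  refine le_of_forall_gt_imp_ge_of_dense fun b hb => ?_
  obtain ⟨y, hxy, hyb⟩ := hU_right.exists_gt_lt_of_Ici ⟨⊤, hx.lt_top⟩ hb
  have hxn_lt : ∀ᶠ n in l, xn n < y := eventually_lt_of_limsup_lt (hxn.trans_lt hxy)
  have hU_lt : ∀ᶠ n in l, U (sn n) y < b := hsn.eventually (hU_usc y hxy.ne_bot b hyb)
  refine limsup_le_of_le (by isBoundedDefault) ?_
  filter_upwards [hxn_lt, hU_lt] with n hn hUn
  exact (hU_mono _ hn.le).trans hUn.le

theorem stmt_7_general {N : ℕ} (D : Set (EuclideanSpace ℝ (Fin N)))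
    (U : D → EReal → EReal)
    (hU1 : ∀ s : D, Monotone (U s))
    (hU2 : ∀ s : D, ∀ x : EReal, ContinuousWithinAt (U s) (Ici x) x)
    (hU3 : ∀ x : EReal, x ≠ ⊥ → UpperSemicontinuous (fun s => U s x))
    (zn : ℕ → D → EReal) (z : D → EReal)
    (hhypo1 : ∀ s : D, ∀ sn : ℕ → D, Tendsto sn atTop (𝓝 s) →
      limsup (fun n => zn n (sn n)) atTop ≤ z s)
    (s : D) (sn : ℕ → D) (hsn : Tendsto sn atTop (𝓝 s)) :
    limsup (fun n => U (sn n) (zn n (sn n))) atTop ≤ U s (z s) :=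
  limsup_apply_le_of_monotone_of_continuousWithinAt_Ici U hU1 (hU2 s (z s))
    (fun y hy => hU3 y hy s) hsn (hhypo1 s sn hsn)

/-- Proposition 3.2(i): let `U ∈ 𝒰(D)`, i.e. `x ↦ U(s,x)` is non-decreasing and
right-continuous for each `s`, and `s ↦ U(s,x)` is upper semicontinuous for each
`x ∈ ℝ ∪ {∞}`. If `z_n` hypo-converges to `z` in `USC(D)` and `s_n → s` in `D`, then
`limsup_n U(s_n, z_n(s_n)) ≤ U(s, z(s))`. -/
theorem stmt_7 {N : ℕ} (D : Set (EuclideanSpace ℝ (Fin N))) (hne : D.Nonempty)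
    (hlc : LocallyCompactSpace D)
    (U : D → EReal → EReal)
    (hU1 : ∀ s : D, Monotone (U s))
    (hU2 : ∀ s : D, ∀ x : EReal, ContinuousWithinAt (U s) (Ici x) x)
    (hU3 : ∀ x : EReal, x ≠ ⊥ → UpperSemicontinuous (fun s => U s x))
    (zn : ℕ → D → EReal) (z : D → EReal)
    (hzn : ∀ n, UpperSemicontinuous (zn n)) (hz : UpperSemicontinuous z)
    (hhypo1 : ∀ s : D, ∀ sn : ℕ → D, Tendsto sn atTop (𝓝 s) →
      limsup (fun n => zn n (sn n)) atTop ≤ z s)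
    (hhypo2 : ∀ s : D, ∃ sn : ℕ → D, Tendsto sn atTop (𝓝 s) ∧
      z s ≤ liminf (fun n => zn n (sn n)) atTop)
    (s : D) (sn : ℕ → D) (hsn : Tendsto sn atTop (𝓝 s)) :
    limsup (fun n => U (sn n) (zn n (sn n))) atTop ≤ U s (z s) :=
  stmt_7_general D U hU1 hU2 hU3 zn z hhypo1 s sn hsn
end

section
/- If U and V both satisfy: for each s, the map x ↦ U(s,x) (resp. V(s,x)) is non-decreasing and right-continuous, and for each x ∈ ℝ ∪ {∞}, s ↦ U(s,x) (resp. V(s,x)) is upper semicontinuous, then the composition W(s,x) = V(s, U(s,x)) satisfies the same two properties. -/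
/-!
Monotonicity and right continuity in `x` pass through the composition directly. For upper
semicontinuity in `s` at `s₀`, given `V(s₀, U(s₀,x)) < c`, right continuity of `V s₀` yields some
`y > U(s₀,x)` with `V(s₀,y) < c` (take `y = ⊤` if `U(s₀,x) = ⊤`). Upper semicontinuity of
`U(·,x)` and of `V(·,y)` then give, for `s` near `s₀`, `U(s,x) < y` and `V(s,y) < c`, so
`V(s,U(s,x)) ≤ V(s,y) < c` by monotonicity of `V s`.
-/

open Set Filter

section

variable {X α β : Type*} [TopologicalSpace X]
  [LinearOrder α] [TopologicalSpace α] [OrderTopology α] [DenselyOrdered α]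
  [LinearOrder β] [TopologicalSpace β] [OrderTopology β]

theorem ContinuousWithinAt.exists_gt_lt_of_Ici_s9 {f : α → β} {a : α} {c : β}
    (hf : ContinuousWithinAt f (Ici a) a) (ha : ¬IsMax a) (hc : f a < c) :
    ∃ y, a < y ∧ f y < c := by
  have : (nhdsWithin a (Ioi a)).NeBot := nhdsGT_neBot_of_exists_gt (not_isMax_iff.1 ha)
  have hlt : ∀ᶠ y in nhdsWithin a (Ioi a), f y < c :=
    (hf.eventually (tendsto_id.eventually_lt_const hc)).filter_mono
      (nhdsWithin_mono _ Ioi_subset_Ici_self)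
  exact (eventually_mem_nhdsWithin.and hlt).exists

theorem UpperSemicontinuousAt.comp_monotone [OrderTop α] {u : X → α} {V : X → α → β} {s₀ : X}
    (hu : UpperSemicontinuousAt u s₀) (hV_mono : ∀ s, Monotone (V s))
    (hV_right : ContinuousWithinAt (V s₀) (Ici (u s₀)) (u s₀))
    (hV : ∀ y, u s₀ < y → UpperSemicontinuousAt (fun s => V s y) s₀)
    (hV_top : UpperSemicontinuousAt (fun s => V s ⊤) s₀) :
    UpperSemicontinuousAt (fun s => V s (u s)) s₀ := by
  intro c hc
  by_cases htop : IsMax (u s₀)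
  · filter_upwards [hV_top c (by simpa [htop.eq_top] using hc)] with s hs
    exact (hV_mono s le_top).trans_lt hs
  · obtain ⟨y, hy, hVy⟩ := hV_right.exists_gt_lt_of_Ici_s9 htop hc
    filter_upwards [hu y hy, hV y hy c hVy] with s hus hVs
    exact (hV_mono s hus.le).trans_lt hVs

end

theorem stmt_9_general {N : ℕ} (D : Set (EuclideanSpace ℝ (Fin N)))
    (U V : D → EReal → EReal)
    (hU1 : ∀ s : D, Monotone (U s))
    (hU2 : ∀ s : D, ∀ x : EReal, ContinuousWithinAt (U s) (Ici x) x)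
    (hU3 : ∀ x : EReal, x ≠ ⊥ → UpperSemicontinuous (fun s => U s x))
    (hV1 : ∀ s : D, Monotone (V s))
    (hV2 : ∀ s : D, ∀ x : EReal, ContinuousWithinAt (V s) (Ici x) x)
    (hV3 : ∀ x : EReal, x ≠ ⊥ → UpperSemicontinuous (fun s => V s x)) :
    (∀ s : D, Monotone (fun x => V s (U s x))) ∧
    (∀ s : D, ∀ x : EReal, ContinuousWithinAt (fun y => V s (U s y)) (Ici x) x) ∧
    (∀ x : EReal, x ≠ ⊥ → UpperSemicontinuous (fun s => V s (U s x))) := by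
  refine ⟨fun s => (hV1 s).comp (hU1 s), fun s x => ?_, fun x hx s₀ => ?_⟩
  · exact (hV2 s (U s x)).comp (hU2 s x) (hU1 s).mapsTo_Ici
  · exact UpperSemicontinuousAt.comp_monotone (hU3 x hx s₀) hV1 (hV2 s₀ _)
      (fun y hy => hV3 y (ne_bot_of_gt hy) s₀) (hV3 ⊤ (by simp) s₀)

/-- Lemma 3.4: the class `𝒰(D)` is stable under composition: if `U` and `V` belong to
`𝒰(D)`, then so does `W(s,x) = V(s, U(s,x))`. -/
theorem stmt_9 {N : ℕ} (D : Set (EuclideanSpace ℝ (Fin N))) (hne : D.Nonempty)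
    (hlc : LocallyCompactSpace D)
    (U V : D → EReal → EReal)
    (hU1 : ∀ s : D, Monotone (U s))
    (hU2 : ∀ s : D, ∀ x : EReal, ContinuousWithinAt (U s) (Ici x) x)
    (hU3 : ∀ x : EReal, x ≠ ⊥ → UpperSemicontinuous (fun s => U s x))
    (hV1 : ∀ s : D, Monotone (V s))
    (hV2 : ∀ s : D, ∀ x : EReal, ContinuousWithinAt (V s) (Ici x) x)
    (hV3 : ∀ x : EReal, x ≠ ⊥ → UpperSemicontinuous (fun s => V s x)) :
    (∀ s : D, Monotone (fun x => V s (U s x))) ∧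
    (∀ s : D, ∀ x : EReal, ContinuousWithinAt (fun y => V s (U s y)) (Ici x) x) ∧
    (∀ x : EReal, x ≠ ⊥ → UpperSemicontinuous (fun s => V s (U s x))) :=
  stmt_9_general D U V hU1 hU2 hU3 hV1 hV2 hV3
end

section
/- Let ξ = (ξ(s) : s ∈ D) be a stochastic process with values in [-∞,∞] whose trajectories are upper semicontinuous, with marginal distribution functions F_s(x) = P(ξ(s) ≤ x) and right-continuous quantile functions Q_s(p) = sup{y ∈ ℝ : F_s(y) ≤ p}. Then for each fixed p ∈ [0,1], the function s ↦ Q_s(p) is upper semicontinuous. -/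
open MeasureTheory Set Filter

/-- Lemma 3.6: if `ξ` is a stochastic process with upper semicontinuous trajectories,
with marginal distribution functions `F_s(x) = P(ξ(s) ≤ x)` and right-continuous quantile
functions `Q_s(p) = sup{y ∈ ℝ : F_s(y) ≤ p}`, then for each fixed `p ∈ [0,1]` the
function `s ↦ Q_s(p)` is upper semicontinuous. -/
theorem stmt_12 {N : ℕ} (D : Set (EuclideanSpace ℝ (Fin N))) (hne : D.Nonempty)
    (hlc : LocallyCompactSpace D)
    {Ω : Type*} [MeasurableSpace Ω] (μ : Measure Ω) [IsProbabilityMeasure μ]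
    (ξ : D → Ω → EReal) (hmeas : ∀ s : D, Measurable (ξ s))
    (husc : ∀ ω : Ω, UpperSemicontinuous (fun s => ξ s ω))
    (Q : D → ℝ → EReal)
    (hQ : ∀ (s : D) (p : ℝ), Q s p = sSup ((fun y : ℝ => (y : EReal)) ''
      {y : ℝ | (μ {ω | ξ s ω ≤ (y : EReal)}).toReal ≤ p}))
    (p : ℝ) (hp : p ∈ Icc (0 : ℝ) 1) :
    UpperSemicontinuous (fun s => Q s p) := by
  intro s₀ c hc
  -- pick rationals r < r' between Q s₀ p and c
  obtain ⟨q, hq1, hq2⟩ := EReal.exists_rat_btwn_of_lt hc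
  obtain ⟨q', hq'1, hq'2⟩ := EReal.exists_rat_btwn_of_lt hq2
  set r : ℝ := (q : ℝ)
  set r' : ℝ := (q' : ℝ)
  -- F_{s₀}(r) > p
  have hF0 : p < (μ {ω | ξ s₀ ω ≤ (r : EReal)}).toReal := by
    by_contra h
    push_neg at h
    have : ((r : ℝ) : EReal) ≤ Q s₀ p := by
      rw [hQ]
      exact le_sSup ⟨r, h, rfl⟩
    exact absurd (this.trans_lt hq1) (lt_irrefl _)
  -- main claim: eventually F_s(r') > p
  have key : ∀ᶠ s in nhds s₀, p < (μ {ω | ξ s ω ≤ ((r' : ℝ) : EReal)}).toReal := by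
    by_contra h
    rw [Filter.not_eventually] at h
    simp only [not_lt] at h
    obtain ⟨u, hu, hun⟩ := Filter.exists_seq_forall_of_frequently h
    set A : ℕ → Set Ω := fun n => {ω | ξ (u n) ω ≤ ((r' : ℝ) : EReal)} with hA
    set B : Set Ω := {ω | ξ s₀ ω ≤ ((r : ℝ) : EReal)} with hB
    set C : ℕ → Set Ω := fun n => B ∩ ⋂ k ∈ Ici n, A k with hC
    have hCmono : Monotone C := by
      intro n m hnm
      exact inter_subset_inter_right _ (biInter_subset_biInter_left (Ici_subset_Ici.2 hnm))
    have hBsub : B ⊆ ⋃ n, C n := by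
      intro ω hω
      have hlt : ξ s₀ ω < ((r' : ℝ) : EReal) := by
        have : ((r : ℝ) : EReal) < ((r' : ℝ) : EReal) := hq'1
        exact lt_of_le_of_lt hω this
      have hev : ∀ᶠ s in nhds s₀, ξ s ω < ((r' : ℝ) : EReal) := husc ω s₀ _ hlt
      have := hu.eventually hev
      obtain ⟨n, hn⟩ := this.exists_forall_of_atTop
      exact mem_iUnion.2 ⟨n, hω, mem_biInter fun k hk => le_of_lt (hn k hk)⟩
    have hμB : ENNReal.ofReal p < μ B := by
      rw [ENNReal.ofReal_lt_iff_lt_toReal hp.1 (measure_ne_top μ B)]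
      exact hF0
    have hμU : ENNReal.ofReal p < μ (⋃ n, C n) :=
      hμB.trans_le (measure_mono hBsub)
    rw [hCmono.measure_iUnion, lt_iSup_iff] at hμU
    obtain ⟨n, hn⟩ := hμU
    have hCA : C n ⊆ A n := fun ω hω =>
      mem_iInter₂.1 hω.2 n (mem_Ici.2 le_rfl)
    have : ENNReal.ofReal p < μ (A n) := hn.trans_le (measure_mono hCA)
    rw [ENNReal.ofReal_lt_iff_lt_toReal hp.1 (measure_ne_top μ (A n))] at this
    exact absurd (hun n) (not_le.2 this)
  -- conclude: eventually Q s p < c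
  filter_upwards [key] with s hs
  have hle : Q s p ≤ ((r' : ℝ) : EReal) := by
    rw [hQ]
    refine sSup_le ?_
    rintro x ⟨y, hy, rfl⟩
    by_contra hxy
    push_neg at hxy
    have hyr' : r' ≤ y := by exact_mod_cast hxy.le
    have hmono : μ {ω | ξ s ω ≤ ((r' : ℝ) : EReal)} ≤ μ {ω | ξ s ω ≤ (y : EReal)} := by
      apply measure_mono
      intro ω hω
      have hω' : ξ s ω ≤ ((r' : ℝ) : EReal) := hω
      exact hω'.trans (by exact_mod_cast hyr')
    have := (ENNReal.toReal_mono (measure_ne_top μ _) hmono)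
    exact absurd (this.trans hy) (not_le.2 hs)
  exact lt_of_le_of_lt hle hq'2
end

section
/- Let ξ be a stochastic process on D with upper semicontinuous trajectories such that (a) for each s the distribution of ξ(s) has no atoms in [-∞,∞], and (b) for each x ∈ ℝ ∪ {+∞} the map s ↦ F_s(x) = P(ξ(s) ≤ x) is upper semicontinuous. Then for each fixed x ∈ ℝ, the map s ↦ F_s(x) is continuous. -/
open MeasureTheory Set Filter Topology ENNReal

/-- Lemma 4.3 (regularity of the marginal distributions in the space variable): if `ξ` is
a process with upper semicontinuous trajectories such that (a) each `ξ(s)` has an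
atomless distribution on `[-∞,∞]` and (b) `s ↦ F_s(x)` is upper semicontinuous for each
`x ∈ ℝ ∪ {+∞}`, then `s ↦ F_s(x)` is continuous for each fixed `x ∈ ℝ`. -/
theorem stmt_13 {N : ℕ} (D : Set (EuclideanSpace ℝ (Fin N))) (hne : D.Nonempty)
    (hlc : LocallyCompactSpace D)
    {Ω : Type*} [MeasurableSpace Ω] (μ : Measure Ω) [IsProbabilityMeasure μ]
    (ξ : D → Ω → EReal) (hmeas : ∀ s : D, Measurable (ξ s))
    (husc : ∀ ω : Ω, UpperSemicontinuous (fun s => ξ s ω))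
    (F : D → EReal → ℝ)
    (hF : ∀ (s : D) (x : EReal), F s x = (μ {ω | ξ s ω ≤ x}).toReal)
    (hatomless : ∀ (s : D) (c : EReal), μ {ω | ξ s ω = c} = 0)
    (huscF : ∀ x : EReal, x ≠ ⊥ → UpperSemicontinuous (fun s => F s x)) :
    ∀ x : ℝ, Continuous (fun s => F s (x : EReal)) := by
  intro x
  rw [continuous_iff_seqContinuous]
  intro s_ s hsn
  set u : ℕ → ℝ := fun n => F (s_ n) (x : EReal) with hu
  have hne_top : ∀ t : D, μ {ω | ξ t ω ≤ (x : EReal)} ≠ ∞ := fun t => measure_ne_top μ _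
  have h0le : ∀ t : D, 0 ≤ F t (x : EReal) := by
    intro t; rw [hF]; exact ENNReal.toReal_nonneg
  have hle1 : ∀ t : D, F t (x : EReal) ≤ 1 := by
    intro t; rw [hF]
    have h1 : μ {ω | ξ t ω ≤ (x : EReal)} ≤ 1 := prob_le_one
    simpa using ENNReal.toReal_mono (by simp) h1
  have hbdd : IsBoundedUnder (· ≤ ·) atTop u :=
    Filter.isBoundedUnder_of ⟨1, fun n => hle1 (s_ n)⟩
  have hbdd' : IsBoundedUnder (· ≥ ·) atTop u :=
    Filter.isBoundedUnder_of ⟨0, fun n => h0le (s_ n)⟩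
  -- lower bound on the liminf, via upper semicontinuity of trajectories and Fatou
  have hliminf : F s (x : EReal) ≤ liminf u atTop := by
    have key : ∀ ε : ℝ, 0 < ε → F s (x : EReal) - ε ≤ liminf u atTop := by
      intro ε hε
      apply Filter.le_liminf_of_le hbdd.isCoboundedUnder_ge
      rcases le_or_gt (F s (x : EReal) - ε) 0 with h0 | h0
      · exact Eventually.of_forall fun n => h0.trans (h0le (s_ n))
      · set y : ℝ := F s (x : EReal) - ε with hy
        have heq : μ {ω | ξ s ω ≤ (x : EReal)} = μ {ω | ξ s ω < (x : EReal)} := by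
          refine le_antisymm ?_ (measure_mono fun ω (h : ξ s ω < (x : EReal)) => le_of_lt h)
          calc μ {ω | ξ s ω ≤ (x : EReal)}
              ≤ μ ({ω | ξ s ω < (x : EReal)} ∪ {ω | ξ s ω = (x : EReal)}) :=
                measure_mono (fun ω (h : ξ s ω ≤ (x : EReal)) => (h.lt_or_eq : ω ∈ _ ∪ _))
            _ ≤ μ {ω | ξ s ω < (x : EReal)} + μ {ω | ξ s ω = (x : EReal)} :=
                measure_union_le _ _
            _ = μ {ω | ξ s ω < (x : EReal)} := by rw [hatomless s (x : EReal), add_zero]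
        have hylt : ENNReal.ofReal y < μ {ω | ξ s ω < (x : EReal)} := by
          rw [← heq, ENNReal.ofReal_lt_iff_lt_toReal h0.le (hne_top s), ← hF]
          exact sub_lt_self _ hε
        set B : ℕ → Set Ω := fun n => ⋂ m, ⋂ (_ : n ≤ m), {ω | ξ (s_ m) ω ≤ (x : EReal)}
          with hB
        have hBmono : Monotone B := fun a b hab ω hω =>
          mem_iInter₂.2 fun m hm => mem_iInter₂.1 hω m (hab.trans hm)
        have hsubset : {ω | ξ s ω < (x : EReal)} ⊆ ⋃ n, B n := by
          intro ω hω
          have h1 : ∀ᶠ t in 𝓝 s, ξ t ω < (x : EReal) := husc ω s (x : EReal) hω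
          obtain ⟨n, hn⟩ := eventually_atTop.1 (hsn.eventually h1)
          exact mem_iUnion.2 ⟨n, mem_iInter₂.2 fun m hm => le_of_lt (hn m hm)⟩
        have hsup : μ {ω | ξ s ω < (x : EReal)} ≤ ⨆ n, μ (B n) := by
          calc μ {ω | ξ s ω < (x : EReal)} ≤ μ (⋃ n, B n) := measure_mono hsubset
            _ = ⨆ n, μ (B n) := (hBmono.directed_le).measure_iUnion
        obtain ⟨n, hn⟩ := lt_iSup_iff.1 (hylt.trans_le hsup)
        refine eventually_atTop.2 ⟨n, fun m hm => ?_⟩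
        have h2 : ENNReal.ofReal y < μ {ω | ξ (s_ m) ω ≤ (x : EReal)} :=
          hn.trans_le (measure_mono (fun ω hω => mem_iInter₂.1 hω m hm))
        have h3 := (ENNReal.ofReal_lt_iff_lt_toReal h0.le (hne_top (s_ m))).1 h2
        rw [← hF] at h3
        exact h3.le
    by_contra hcon
    push_neg at hcon
    have := key ((F s (x : EReal) - liminf u atTop) / 2) (by linarith)
    linarith
  -- upper bound on the limsup, via upper semicontinuity of F
  have hlimsup : limsup u atTop ≤ F s (x : EReal) := by
    have key : ∀ ε : ℝ, 0 < ε → limsup u atTop ≤ F s (x : EReal) + ε := by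
      intro ε hε
      apply Filter.limsup_le_of_le hbdd'.isCoboundedUnder_le
      have h1 : ∀ᶠ t in 𝓝 s, F t (x : EReal) < F s (x : EReal) + ε :=
        huscF (x : EReal) (by simp) s (F s (x : EReal) + ε) (lt_add_of_pos_right _ hε)
      exact (hsn.eventually h1).mono fun n hn => hn.le
    by_contra hcon
    push_neg at hcon
    have := key ((limsup u atTop - F s (x : EReal)) / 2) (by linarith)
    linarith
  exact tendsto_of_le_liminf_of_limsup_le hliminf hlimsup hbdd hbdd'
end

section
/- If a sequence of GEV distribution functions F(·; θ_n) with parameters θ_n = (γ_n, μ_n, σ_n) converges weakly (equivalently, pointwise) to a GEV distribution function F(·; θ_0), then θ_n → θ_0 in ℝ × ℝ × (0,∞). -/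
open Filter

/-- The GEV distribution function with parameter `θ = (γ, μ, σ)`. -/
noncomputable def gevCDF (γ μ σ : ℝ) (x : ℝ) : ℝ :=
  if γ = 0 then Real.exp (-Real.exp (-(x - μ) / σ))
  else if 0 < 1 + γ * (x - μ) / σ then Real.exp (-(1 + γ * (x - μ) / σ) ^ (-1 / γ))
  else if 0 < γ then 0 else 1

/-!
Writing `Q(θ, t) = μ + σ g_γ(t)` for the quantile of `F(·; θ)` at level `e^{-t}`, pointwise
convergence of monotone distribution functions forces `Q(θ_n, t) → Q(θ_0, t)` for every `t > 0`,
because `F(·; θ_0)` crosses the level `e^{-t}` strictly at `Q(θ_0, t)`. Three quantiles recover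
the parameter continuously: `Q(θ, 1) = μ`, `Q(θ, e⁻¹) - μ = σ (e^γ - 1)/γ` and
`μ - Q(θ, e) = σ (1 - e^{-γ})/γ`, whose ratio is `e^γ`. The factor `(e^γ - 1)/γ`, equal to `1`
at `γ = 0`, is `dslope exp 0 γ`, which is continuous and positive.
-/

open Real Topology

noncomputable def gevStdQuantile (γ t : ℝ) : ℝ :=
  if γ = 0 then -log t else (t ^ (-γ) - 1) / γ

theorem tendsto_quantile_of_tendsto_pointwise {ι : Type*} {l : Filter ι} {F : ι → ℝ → ℝ}
    {F₀ : ℝ → ℝ} {q : ι → ℝ} {q₀ c : ℝ} (hF : ∀ i, Monotone (F i))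
    (hconv : ∀ x, Tendsto (fun i => F i x) l (𝓝 (F₀ x))) (hq : ∀ i, F i (q i) = c)
    (hlt : ∀ x < q₀, F₀ x < c) (hgt : ∀ x, q₀ < x → c < F₀ x) : Tendsto q l (𝓝 q₀) := by
  rw [tendsto_order]
  constructor
  · intro x hx
    filter_upwards [(hconv x).eventually_lt_const (hlt x hx)] with i hi
    by_contra! h
    exact (hq i ▸ hF i h).not_gt hi
  · intro x hx
    filter_upwards [(hconv x).eventually_const_lt (hgt x hx)] with i hi
    by_contra! h
    exact (hq i ▸ hF i h).not_gt hi

theorem monotone_ite_pos_exp_neg_rpow {p : ℝ} (hp : p < 0) :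
    Monotone fun u : ℝ => if 0 < u then exp (-u ^ p) else 0 := by
  intro a b hab
  by_cases ha : 0 < a
  · simp only [ha, ha.trans_le hab, if_true]
    exact exp_le_exp.2 (neg_le_neg (rpow_le_rpow_of_nonpos ha hab hp.le))
  · simp only [ha, if_false]
    split_ifs <;> positivity

theorem antitone_ite_pos_exp_neg_rpow {p : ℝ} (hp : 0 ≤ p) :
    Antitone fun u : ℝ => if 0 < u then exp (-u ^ p) else 1 := by
  intro a b hab
  by_cases ha : 0 < a
  · simp only [ha, ha.trans_le hab, if_true]
    exact exp_le_exp.2 (neg_le_neg (rpow_le_rpow ha.le hab hp))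
  · simp only [ha, if_false]
    split_ifs with hb
    · exact exp_le_one_iff.2 (neg_nonpos.2 (rpow_nonneg hb.le p))
    · exact le_rfl

theorem gevCDF_monotone {γ μ σ : ℝ} (hσ : 0 < σ) : Monotone (gevCDF γ μ σ) := by
  rcases lt_trichotomy γ 0 with hγ | rfl | hγ
  · have hs : Antitone fun x => 1 + γ * (x - μ) / σ := fun a b hab => by
      have := mul_le_mul_of_nonpos_left (sub_le_sub_right hab μ) hγ.le
      dsimp only
      gcongr
    convert (antitone_ite_pos_exp_neg_rpow (p := -1 / γ) ?_).comp hs using 1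
    · funext x
      simp [gevCDF, hγ.ne, not_lt.2 hγ.le]
    · exact div_nonneg_of_nonpos (by norm_num) hγ.le
  · intro a b hab
    simp only [gevCDF, if_true]
    gcongr
  · have hs : Monotone fun x => 1 + γ * (x - μ) / σ := fun a b hab => by dsimp only; gcongr
    convert (monotone_ite_pos_exp_neg_rpow (p := -1 / γ) ?_).comp hs using 1
    · funext x
      simp [gevCDF, hγ.ne', hγ]
    · exact div_neg_of_neg_of_pos (by norm_num) hγ

theorem gevCDF_quantile {γ μ σ t : ℝ} (hσ : 0 < σ) (ht : 0 < t) :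
    gevCDF γ μ σ (μ + σ * gevStdQuantile γ t) = exp (-t) := by
  unfold gevCDF gevStdQuantile
  rcases eq_or_ne γ 0 with rfl | hγ
  · have : -(μ + σ * -log t - μ) / σ = log t := by field_simp; ring
    simp only [if_true, this, exp_log ht]
  · have : 1 + γ * (μ + σ * ((t ^ (-γ) - 1) / γ) - μ) / σ = t ^ (-γ) := by field_simp; ring
    rw [if_neg hγ, if_neg hγ, this, if_pos (rpow_pos_of_pos ht _), ← rpow_mul ht.le,
      show -γ * (-1 / γ) = 1 by field_simp, rpow_one]

theorem continuousAt_gevStdQuantile (γ : ℝ) {t : ℝ} (ht : 0 < t) :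
    ContinuousAt (gevStdQuantile γ) t := by
  unfold gevStdQuantile
  rcases eq_or_ne γ 0 with rfl | hγ
  · simp only [if_true]
    exact (continuousAt_log ht.ne').neg
  · simp only [if_neg hγ]
    exact ((continuousAt_rpow_const t (-γ) (Or.inl ht.ne')).sub continuousAt_const).div_const γ

theorem gevCDF_lt_exp_neg_of_lt_quantile {γ μ σ t x : ℝ} (hσ : 0 < σ) (ht : 0 < t)
    (hx : x < μ + σ * gevStdQuantile γ t) : gevCDF γ μ σ x < exp (-t) := by
  have hQ : Tendsto (fun s => μ + σ * gevStdQuantile γ s) (𝓝[>] t)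
      (𝓝 (μ + σ * gevStdQuantile γ t)) :=
    (((continuousAt_gevStdQuantile γ ht).const_mul σ).const_add μ).tendsto.mono_left
      nhdsWithin_le_nhds
  obtain ⟨s, hxs, hts⟩ := ((hQ.eventually_const_lt hx).and self_mem_nhdsWithin).exists
  calc gevCDF γ μ σ x ≤ gevCDF γ μ σ (μ + σ * gevStdQuantile γ s) := gevCDF_monotone hσ hxs.le
    _ = exp (-s) := gevCDF_quantile hσ (ht.trans hts)
    _ < exp (-t) := exp_lt_exp.2 (neg_lt_neg hts)

theorem exp_neg_lt_gevCDF_of_quantile_lt {γ μ σ t x : ℝ} (hσ : 0 < σ) (ht : 0 < t)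
    (hx : μ + σ * gevStdQuantile γ t < x) : exp (-t) < gevCDF γ μ σ x := by
  have hQ : Tendsto (fun s => μ + σ * gevStdQuantile γ s) (𝓝[<] t)
      (𝓝 (μ + σ * gevStdQuantile γ t)) :=
    (((continuousAt_gevStdQuantile γ ht).const_mul σ).const_add μ).tendsto.mono_left
      nhdsWithin_le_nhds
  obtain ⟨s, ⟨hxs, hs⟩, hst⟩ := (((hQ.eventually_lt_const hx).and
    ((eventually_gt_nhds ht).filter_mono nhdsWithin_le_nhds)).and self_mem_nhdsWithin).exists
  calc exp (-t) < exp (-s) := exp_lt_exp.2 (neg_lt_neg hst)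
    _ = gevCDF γ μ σ (μ + σ * gevStdQuantile γ s) := (gevCDF_quantile hσ hs).symm
    _ ≤ gevCDF γ μ σ x := gevCDF_monotone hσ hxs.le

theorem tendsto_gevQuantile {ι : Type*} {l : Filter ι} {γ μ σ : ι → ℝ} {γ₀ μ₀ σ₀ t : ℝ}
    (hσ : ∀ i, 0 < σ i) (hσ₀ : 0 < σ₀)
    (hconv : ∀ x, Tendsto (fun i => gevCDF (γ i) (μ i) (σ i) x) l (𝓝 (gevCDF γ₀ μ₀ σ₀ x)))
    (ht : 0 < t) :
    Tendsto (fun i => μ i + σ i * gevStdQuantile (γ i) t) l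
      (𝓝 (μ₀ + σ₀ * gevStdQuantile γ₀ t)) :=
  tendsto_quantile_of_tendsto_pointwise (fun i => gevCDF_monotone (hσ i)) hconv
    (fun i => gevCDF_quantile (hσ i) ht) (fun _ hx => gevCDF_lt_exp_neg_of_lt_quantile hσ₀ ht hx)
    (fun _ hx => exp_neg_lt_gevCDF_of_quantile_lt hσ₀ ht hx)

theorem gevStdQuantile_one (γ : ℝ) : gevStdQuantile γ 1 = 0 := by
  simp [gevStdQuantile]

theorem gevStdQuantile_exp_neg_one (γ : ℝ) : gevStdQuantile γ (exp (-1)) = dslope exp 0 γ := by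
  rcases eq_or_ne γ 0 with rfl | hγ
  · simp [gevStdQuantile]
  · rw [gevStdQuantile, if_neg hγ, dslope_of_ne _ hγ, slope_def_field, ← exp_mul]
    simp

theorem gevStdQuantile_exp_one (γ : ℝ) : gevStdQuantile γ (exp 1) = -dslope exp 0 (-γ) := by
  rcases eq_or_ne γ 0 with rfl | hγ
  · simp [gevStdQuantile]
  · rw [gevStdQuantile, if_neg hγ, dslope_of_ne _ (neg_ne_zero.2 hγ), slope_def_field,
      ← exp_mul]
    simp only [one_mul, exp_zero, sub_zero]
    rw [div_neg, neg_neg]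

theorem dslope_exp_zero_pos (γ : ℝ) : 0 < dslope exp 0 γ := by
  rcases eq_or_ne γ 0 with rfl | hγ
  · simp
  · rw [dslope_of_ne _ hγ]
    exact exp_strictMono.strictMonoOn Set.univ |>.slope_pos trivial trivial hγ.symm

theorem continuous_dslope_exp_zero : Continuous (dslope exp 0) :=
  continuousOn_univ.1 <| (continuousOn_dslope Filter.univ_mem).2
    ⟨continuous_exp.continuousOn, differentiableAt_exp⟩

theorem dslope_exp_zero_div_dslope_neg (γ : ℝ) : dslope exp 0 γ / dslope exp 0 (-γ) = exp γ := by
  rcases eq_or_ne γ 0 with rfl | hγ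
  · simp
  · rw [dslope_of_ne _ hγ, dslope_of_ne _ (neg_ne_zero.2 hγ), slope_def_field, slope_def_field,
      exp_neg, exp_zero, sub_zero]
    have : 1 - exp γ ≠ 0 := sub_ne_zero.2 (Ne.symm ((exp_eq_one_iff γ).not.2 hγ))
    field_simp
    ring

/-- Lemma D.1: if a sequence of GEV distribution functions with parameters
`θ_n = (γ_n, μ_n, σ_n)` converges weakly (equivalently, pointwise) to the GEV
distribution function with parameter `θ_0 = (γ_0, μ_0, σ_0)`, then `θ_n → θ_0` in
`ℝ × ℝ × (0,∞)`. -/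
theorem stmt_16 (γ μ σ : ℕ → ℝ) (γ₀ μ₀ σ₀ : ℝ)
    (hσ : ∀ n, 0 < σ n) (hσ₀ : 0 < σ₀)
    (hconv : ∀ x : ℝ, Tendsto (fun n => gevCDF (γ n) (μ n) (σ n) x) atTop
      (nhds (gevCDF γ₀ μ₀ σ₀ x))) :
    Tendsto γ atTop (nhds γ₀) ∧ Tendsto μ atTop (nhds μ₀) ∧
      Tendsto σ atTop (nhds σ₀) := by
  have hq {t : ℝ} (ht : 0 < t) := tendsto_gevQuantile hσ hσ₀ hconv ht
  have hμ : Tendsto μ atTop (𝓝 μ₀) := by simpa [gevStdQuantile_one] using hq one_pos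
  have hA : Tendsto (fun n => σ n * dslope exp 0 (γ n)) atTop (𝓝 (σ₀ * dslope exp 0 γ₀)) := by
    simpa [gevStdQuantile_exp_neg_one] using (hq (exp_pos (-1))).sub hμ
  have hB : Tendsto (fun n => σ n * dslope exp 0 (-γ n)) atTop
      (𝓝 (σ₀ * dslope exp 0 (-γ₀))) := by
    simpa [gevStdQuantile_exp_one] using hμ.sub (hq (exp_pos 1))
  have hγ : Tendsto γ atTop (𝓝 γ₀) := by
    have hexp := hA.div hB (mul_pos hσ₀ (dslope_exp_zero_pos _)).ne'
    rw [mul_div_mul_left _ _ hσ₀.ne', dslope_exp_zero_div_dslope_neg] at hexp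
    replace hexp : Tendsto (fun n => exp (γ n)) atTop (𝓝 (exp γ₀)) := hexp.congr fun n => by
      rw [Pi.div_apply, mul_div_mul_left _ _ (hσ n).ne', dslope_exp_zero_div_dslope_neg]
    simpa using hexp.log (exp_pos γ₀).ne'
  refine ⟨hγ, hμ, ?_⟩
  have hD := (continuous_dslope_exp_zero.tendsto γ₀).comp hγ
  have hσlim := hA.div hD (dslope_exp_zero_pos γ₀).ne'
  rw [mul_div_cancel_right₀ _ (dslope_exp_zero_pos γ₀).ne'] at hσlim
  exact hσlim.congr fun n => mul_div_cancel_right₀ _ (dslope_exp_zero_pos _).ne'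
end

section
/- For every upper semicontinuous function z : D → [-∞,∞] on a separable metric space D, there exists a countable set Q_z ⊂ D such that z(s) = inf_{ε>0} sup{z(t) : t ∈ Q_z, d(s,t) ≤ ε} for all s ∈ D; consequently, for any upper semicontinuous x : D → [-∞,∞], x ≥ z on D if and only if x ≥ z on Q_z. -/
open Set

/-- Lemma C.2: for every upper semicontinuous `z : D → [-∞,∞]` on a separable metric
space `D`, there is a countable set `Q_z ⊆ D` with
`z(s) = inf_{ε>0} sup{z(t) : t ∈ Q_z, d(s,t) ≤ ε}` for all `s`; consequently, for any
upper semicontinuous `x`, `x ≥ z` on `D` iff `x ≥ z` on `Q_z`. -/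
theorem stmt_17 {D : Type*} [MetricSpace D] [TopologicalSpace.SeparableSpace D]
    (z : D → EReal) (hz : UpperSemicontinuous z) :
    ∃ Qz : Set D, Qz.Countable ∧
      (∀ s : D, z s = ⨅ (ε : ℝ) (_ : 0 < ε), ⨆ (t : D) (_ : t ∈ Qz) (_ : dist s t ≤ ε), z t) ∧
      (∀ x : D → EReal, UpperSemicontinuous x →
        ((∀ s : D, z s ≤ x s) ↔ ∀ t ∈ Qz, z t ≤ x t)) := by
  haveI : SecondCountableTopology D := UniformSpace.secondCountable_of_separable D
  obtain ⟨B, hBc, -, hB⟩ := TopologicalSpace.exists_countable_basis D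
  classical
  set Qz : Set D := ⋃ (q : ℚ) (U ∈ B),
      if h : ∃ t ∈ U, ((q : ℝ) : EReal) < z t then {h.choose} else ∅ with hQz
  -- key upper bound, valid for any usc function
  have key : ∀ (x : D → EReal), UpperSemicontinuous x → ∀ s : D,
      (⨅ (ε : ℝ) (_ : 0 < ε), ⨆ (t : D) (_ : t ∈ Qz) (_ : dist s t ≤ ε), x t) ≤ x s := by
    intro x hx s
    refine le_of_forall_gt_imp_ge_of_dense fun c hc => ?_
    obtain ⟨q, hq1, hq2⟩ := EReal.exists_rat_btwn_of_lt hc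
    have h := hx s _ hq1
    rw [Metric.eventually_nhds_iff] at h
    obtain ⟨δ, hδ, hδ'⟩ := h
    calc (⨅ (ε : ℝ) (_ : 0 < ε), ⨆ (t : D) (_ : t ∈ Qz) (_ : dist s t ≤ ε), x t)
        ≤ ⨆ (t : D) (_ : t ∈ Qz) (_ : dist s t ≤ δ / 2), x t :=
          iInf₂_le (δ / 2) (half_pos hδ)
      _ ≤ ((q : ℝ) : EReal) := by
          refine iSup₂_le fun t ht => iSup_le fun hdist => ?_
          have : dist t s < δ := by rw [dist_comm]; linarith
          exact (hδ' this).le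
      _ ≤ c := hq2.le
  -- the equality
  have main : ∀ s : D,
      z s = ⨅ (ε : ℝ) (_ : 0 < ε), ⨆ (t : D) (_ : t ∈ Qz) (_ : dist s t ≤ ε), z t := by
    intro s
    refine le_antisymm ?_ (key z hz s)
    refine le_iInf₂ fun ε hε => ?_
    refine le_of_forall_lt_imp_le_of_dense fun c hc => ?_
    obtain ⟨q, hq1, hq2⟩ := EReal.exists_rat_btwn_of_lt hc
    obtain ⟨U, hU, hsU, hUb⟩ :=
      hB.exists_subset_of_mem_open (Metric.mem_ball_self hε) Metric.isOpen_ball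
    have hex : ∃ t ∈ U, ((q : ℝ) : EReal) < z t := ⟨s, hsU, hq2⟩
    have hch := hex.choose_spec
    have hmem : hex.choose ∈ Qz := by
      refine Set.mem_iUnion.2 ⟨q, Set.mem_iUnion₂.2 ⟨U, hU, ?_⟩⟩
      rw [dif_pos hex]
      exact rfl
    have hdist : dist s hex.choose ≤ ε := by
      have h2 := hUb hch.1
      rw [Metric.mem_ball, dist_comm] at h2
      exact h2.le
    calc c ≤ ((q : ℝ) : EReal) := hq1.le
      _ ≤ z hex.choose := hch.2.le
      _ ≤ ⨆ (t : D) (_ : t ∈ Qz) (_ : dist s t ≤ ε), z t :=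
          le_iSup₂_of_le hex.choose hmem (le_iSup_of_le hdist le_rfl)
  refine ⟨Qz, ?_, main, ?_⟩
  · refine Set.countable_iUnion fun q => Set.Countable.biUnion hBc fun U _ => ?_
    split
    · exact Set.countable_singleton _
    · exact Set.countable_empty
  · intro x hx
    refine ⟨fun h t _ => h t, fun h s => ?_⟩
    rw [main s]
    refine le_trans ?_ (key x hx s)
    gcongr with ε hε t ht hd
    exact h t ht
end

section
/- Let Z be a stochastic process on D with upper semicontinuous trajectories and standard uniform marginal distributions, let (F_s : s ∈ D) be a family of distribution functions with right-continuous quantile functions Q_s(p) = sup{x ∈ ℝ : F_s(x) ≤ p}, and assume that for every p ∈ [0,1] the map s ↦ Q_s(p) is upper semicontinuous. Then the process ξ(s) = Q_s((Z(s) ∨ 0) ∧ 1) has upper semicontinuous trajectories and the marginal distribution of ξ(s) is F_s for every s. -/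
/-!
Write `U = (Z ∨ 0) ∧ 1`. Since `F x ≤ p` forces `x ≤ Q p` and `p < F x` forces `Q p ≤ x`, the
event `{Q(U) ≤ x}` contains `{U < F x}`, and by right-continuity of `F` it is contained in
`{U ≤ F x}`; both bounds have probability `F x` because `U` is uniform.

For the trajectories, `p ↦ Q_s(p)` is monotone and upper semicontinuous from the right. So if
`Q_{s₀}(U(s₀)) < y`, there is `q > U(s₀)` in `[0,1]` with `Q_{s₀}(q) < y` (or `q = 1` when
`U(s₀) = 1`); near `s₀` both `U(s) < q` and `Q_s(q) < y`, hence `Q_s(U(s)) ≤ Q_s(q) < y`.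
-/

open MeasureTheory Set Filter Topology

noncomputable def upperQuantile (F : ℝ → ℝ) (p : ℝ) : EReal :=
  sSup ((↑) '' {x : ℝ | F x ≤ p})

section upperQuantile

variable {F : ℝ → ℝ} {p x : ℝ}

theorem upperQuantile_mono (F : ℝ → ℝ) : Monotone (upperQuantile F) :=
  fun _ _ hpq => sSup_le_sSup (image_mono fun _ hx => le_trans hx hpq)

theorem le_upperQuantile (h : F x ≤ p) : (x : EReal) ≤ upperQuantile F p :=
  le_sSup ⟨x, h, rfl⟩

theorem lt_apply_of_upperQuantile_lt (h : upperQuantile F p < x) : p < F x :=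
  lt_of_not_ge fun hx => (le_upperQuantile hx).not_gt h

theorem upperQuantile_le_of_lt_apply (hF : Monotone F) (h : p < F x) :
    upperQuantile F p ≤ x := by
  refine sSup_le ?_
  rintro _ ⟨y, hy, rfl⟩
  exact EReal.coe_le_coe_iff.2 (le_of_not_gt fun hxy => (hF hxy.le).not_gt (hy.trans_lt h))

theorem le_apply_of_upperQuantile_le (hF : ContinuousWithinAt F (Ici x) x)
    (h : upperQuantile F p ≤ x) : p ≤ F x := by
  have hright : Tendsto F (𝓝[>] x) (𝓝 (F x)) :=
    hF.mono_left (nhdsWithin_mono x Ioi_subset_Ici_self)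
  refine ge_of_tendsto hright (eventually_nhdsWithin_of_forall fun y hy => ?_)
  exact (lt_apply_of_upperQuantile_lt (h.trans_lt (EReal.coe_lt_coe_iff.2 hy))).le

theorem eventually_upperQuantile_lt (hF : Monotone F) {y : EReal} (hy : upperQuantile F p < y) :
    ∀ᶠ q in 𝓝[>] p, upperQuantile F q < y := by
  obtain ⟨r, hpr, hry⟩ := EReal.exists_between_coe_real hy
  filter_upwards [Ioo_mem_nhdsGT (lt_apply_of_upperQuantile_lt hpr)] with q hq
  exact (upperQuantile_le_of_lt_apply hF hq.2).trans_lt hry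

end upperQuantile

noncomputable def unitClamp (z : EReal) : ℝ :=
  ((z ⊔ 0) ⊓ 1).toReal

theorem sup_zero_inf_one_ne_bot (z : EReal) : (z ⊔ 0) ⊓ 1 ≠ ⊥ :=
  ne_bot_of_le_ne_bot EReal.zero_ne_bot (le_inf le_sup_right zero_le_one)

theorem sup_zero_inf_one_ne_top (z : EReal) : (z ⊔ 0) ⊓ 1 ≠ ⊤ :=
  ne_top_of_le_ne_top (EReal.coe_ne_top 1) inf_le_right

theorem coe_unitClamp (z : EReal) : (unitClamp z : EReal) = (z ⊔ 0) ⊓ 1 :=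
  EReal.coe_toReal (sup_zero_inf_one_ne_top z) (sup_zero_inf_one_ne_bot z)

theorem unitClamp_mem_Icc (z : EReal) : unitClamp z ∈ Icc (0 : ℝ) 1 := by
  simp only [mem_Icc, ← EReal.coe_le_coe_iff, coe_unitClamp, EReal.coe_zero, EReal.coe_one]
  exact ⟨le_inf le_sup_right zero_le_one, inf_le_right⟩

theorem monotone_unitClamp : Monotone unitClamp := fun _ _ h =>
  EReal.toReal_le_toReal (inf_le_inf_right _ (sup_le_sup_right h _))
    (sup_zero_inf_one_ne_bot _) (sup_zero_inf_one_ne_top _)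

theorem continuous_unitClamp : Continuous unitClamp :=
  EReal.continuousOn_toReal.comp_continuous
    ((continuous_id.sup continuous_const).inf continuous_const)
    fun z => by simp [sup_zero_inf_one_ne_bot z, sup_zero_inf_one_ne_top z]

theorem unitClamp_le_iff {z : EReal} {t : ℝ} (h0 : 0 ≤ t) (h1 : t < 1) :
    unitClamp z ≤ t ↔ z ≤ t := by
  have h0' : (0 : EReal) ≤ t := EReal.coe_nonneg.2 h0
  have h1' : (t : EReal) < 1 := by exact_mod_cast h1
  rw [← EReal.coe_le_coe_iff, coe_unitClamp, inf_le_iff, sup_le_iff]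
  simp [h0', h1'.not_ge]

theorem UpperSemicontinuous.upperQuantile_comp {X : Type*} [TopologicalSpace X]
    {F : X → ℝ → ℝ} (hF : ∀ s, Monotone (F s))
    (hQ : ∀ p ∈ Icc (0 : ℝ) 1, UpperSemicontinuous fun s => upperQuantile (F s) p)
    {g : X → ℝ} (hg : UpperSemicontinuous g) (hg01 : ∀ s, g s ∈ Icc (0 : ℝ) 1) :
    UpperSemicontinuous fun s => upperQuantile (F s) (g s) := by
  intro s₀ y hy
  obtain ⟨q, hq01, hqy, hgq⟩ : ∃ q ∈ Icc (0 : ℝ) 1,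
      upperQuantile (F s₀) q < y ∧ ∀ᶠ s in 𝓝 s₀, g s ≤ q := by
    rcases (hg01 s₀).2.lt_or_eq with hlt | heq
    · obtain ⟨q, hqy, hgq, hq1⟩ :=
        ((eventually_upperQuantile_lt (hF s₀) hy).and (Ioo_mem_nhdsGT hlt)).exists
      exact ⟨q, ⟨(hg01 s₀).1.trans hgq.le, hq1.le⟩, hqy, (hg s₀ q hgq).mono fun _ => le_of_lt⟩
    · exact ⟨1, right_mem_Icc.2 zero_le_one, heq ▸ hy, Eventually.of_forall fun s => (hg01 s).2⟩
  filter_upwards [hQ q hq01 s₀ y hqy, hgq] with s hsy hsq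
  exact (upperQuantile_mono _ hsq).trans_lt hsy

theorem measure_toReal_eq_of_uniform {Ω : Type*} [MeasurableSpace Ω] {μ : Measure Ω}
    [IsProbabilityMeasure μ] {U : Ω → ℝ}
    (hU : ∀ t ∈ Ico (0 : ℝ) 1, (μ {ω | U ω ≤ t}).toReal = t) {c : ℝ} (hc : c ∈ Icc (0 : ℝ) 1)
    {E : Set Ω} (hlo : {ω | U ω < c} ⊆ E) (hup : E ⊆ {ω | U ω ≤ c}) :
    (μ E).toReal = c := by
  refine le_antisymm ?_ (le_of_forall_lt_imp_le_of_dense fun t ht => ?_)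
  · rcases hc.2.lt_or_eq with hc1 | rfl
    · calc (μ E).toReal ≤ (μ {ω | U ω ≤ c}).toReal := measureReal_mono hup
        _ = c := hU c ⟨hc.1, hc1⟩
    · exact measureReal_le_one
  · rcases lt_or_ge t 0 with ht0 | ht0
    · exact ht0.le.trans ENNReal.toReal_nonneg
    · calc t = (μ {ω | U ω ≤ t}).toReal := (hU t ⟨ht0, ht.trans_le hc.2⟩).symm
        _ ≤ (μ E).toReal := measureReal_mono fun ω hω => hlo (lt_of_le_of_lt hω ht)

theorem stmt_19_general {N : ℕ} (D : Set (EuclideanSpace ℝ (Fin N)))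
    {Ω : Type*} [MeasurableSpace Ω] (μ : Measure Ω) [IsProbabilityMeasure μ]
    (Z : D → Ω → EReal)
    (hZusc : ∀ ω : Ω, UpperSemicontinuous (fun s => Z s ω))
    (hZunif : ∀ s : D, ∀ p ∈ Icc (0 : ℝ) 1,
      (μ {ω | Z s ω ≤ (p : EReal)}).toReal = p)
    (F : D → ℝ → ℝ)
    (hFmono : ∀ s : D, Monotone (F s))
    (hFrc : ∀ s : D, ∀ x : ℝ, ContinuousWithinAt (F s) (Ici x) x)
    (hF0 : ∀ s : D, Filter.Tendsto (F s) Filter.atBot (nhds 0))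
    (hF1 : ∀ s : D, Filter.Tendsto (F s) Filter.atTop (nhds 1))
    (Q : D → ℝ → EReal)
    (hQ : ∀ (s : D) (p : ℝ), Q s p = sSup ((fun x : ℝ => (x : EReal)) ''
      {x : ℝ | F s x ≤ p}))
    (hQusc : ∀ p ∈ Icc (0 : ℝ) 1, UpperSemicontinuous (fun s => Q s p))
    (ξ : D → Ω → EReal)
    (hξ : ∀ (s : D) (ω : Ω), ξ s ω = Q s (((Z s ω ⊔ 0) ⊓ 1).toReal)) :
    (∀ ω : Ω, UpperSemicontinuous (fun s => ξ s ω)) ∧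
      (∀ (s : D) (x : ℝ), (μ {ω | ξ s ω ≤ (x : EReal)}).toReal = F s x) := by
  obtain rfl : Q = fun s => upperQuantile (F s) := funext fun s => funext (hQ s)
  obtain rfl : ξ = fun s ω => upperQuantile (F s) (unitClamp (Z s ω)) :=
    funext fun s => funext (hξ s)
  refine ⟨fun ω => ?_, fun s x => ?_⟩
  · exact UpperSemicontinuous.upperQuantile_comp hFmono hQusc
      (continuous_unitClamp.comp_upperSemicontinuous (hZusc ω) monotone_unitClamp)
      fun s => unitClamp_mem_Icc _
  · have hUnif : ∀ t ∈ Ico (0 : ℝ) 1, (μ {ω | unitClamp (Z s ω) ≤ t}).toReal = t := by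
      intro t ht
      simp only [unitClamp_le_iff ht.1 ht.2]
      exact hZunif s t (Ico_subset_Icc_self ht)
    exact measure_toReal_eq_of_uniform hUnif
      ⟨(hFmono s).le_of_tendsto (hF0 s) x, (hFmono s).ge_of_tendsto (hF1 s) x⟩
      (fun ω hω => upperQuantile_le_of_lt_apply (hFmono s) hω)
      (fun ω hω => le_apply_of_upperQuantile_le (hFrc s x) hω)

/-- Proposition 4.1 (à la Sklar I, sufficiency direction): let `Z` be a process with
upper semicontinuous trajectories and standard uniform margins, let `(F_s)` be a family
of distribution functions with right-continuous quantile functions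
`Q_s(p) = sup{x ∈ ℝ : F_s(x) ≤ p}`, and suppose `s ↦ Q_s(p)` is upper semicontinuous for
every `p ∈ [0,1]`. Then the process `ξ(s) = Q_s((Z(s) ∨ 0) ∧ 1)` has upper
semicontinuous trajectories and the marginal distribution of `ξ(s)` is `F_s`. -/
theorem stmt_19 {N : ℕ} (D : Set (EuclideanSpace ℝ (Fin N))) (hne : D.Nonempty)
    (hlc : LocallyCompactSpace D)
    {Ω : Type*} [MeasurableSpace Ω] (μ : Measure Ω) [IsProbabilityMeasure μ]
    (Z : D → Ω → EReal) (hZmeas : ∀ s : D, Measurable (Z s))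
    (hZusc : ∀ ω : Ω, UpperSemicontinuous (fun s => Z s ω))
    (hZunif : ∀ s : D, ∀ p ∈ Icc (0 : ℝ) 1,
      (μ {ω | Z s ω ≤ (p : EReal)}).toReal = p)
    (F : D → ℝ → ℝ)
    (hFmono : ∀ s : D, Monotone (F s))
    (hFrc : ∀ s : D, ∀ x : ℝ, ContinuousWithinAt (F s) (Ici x) x)
    (hF0 : ∀ s : D, Filter.Tendsto (F s) Filter.atBot (nhds 0))
    (hF1 : ∀ s : D, Filter.Tendsto (F s) Filter.atTop (nhds 1))
    (Q : D → ℝ → EReal)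
    (hQ : ∀ (s : D) (p : ℝ), Q s p = sSup ((fun x : ℝ => (x : EReal)) ''
      {x : ℝ | F s x ≤ p}))
    (hQusc : ∀ p ∈ Icc (0 : ℝ) 1, UpperSemicontinuous (fun s => Q s p))
    (ξ : D → Ω → EReal)
    (hξ : ∀ (s : D) (ω : Ω), ξ s ω = Q s (((Z s ω ⊔ 0) ⊓ 1).toReal)) :
    (∀ ω : Ω, UpperSemicontinuous (fun s => ξ s ω)) ∧
      (∀ (s : D) (x : ℝ), (μ {ω | ξ s ω ≤ (x : EReal)}).toReal = F s x) :=
  stmt_19_general D μ Z hZusc hZunif F hFmono hFrc hF0 hF1 Q hQ hQusc ξ hξ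
end
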